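/- arXiv:2503.21285 — 4 statements merged into one kernel-verified Lean document; each statement's English description precedes it below -/
import Mathlib

section
/- Let G be an additive subgroup of ℂ that is not discrete (i.e., G with the subspace topology is not a discrete topological space). Then the set of real parts {Re z : z ∈ G} is dense in ℝ, or the set of imaginary parts {Im z : z ∈ G} is dense in ℝ. -/
/-!
If neither the real nor the imaginary parts of `G` are dense, both are cyclic, hence discrete,
subgroups of `ℝ`. Then `z ↦ (Re z, Im z)` is a continuous injection of `G` into a product of
two discrete spaces, so `G` is discrete.
-/

open Complex

theorem AddSubgroup.discreteTopology_of_not_dense {G : Type*} [AddCommGroup G] [LinearOrder G]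
    [IsOrderedAddMonoid G] [TopologicalSpace G] [OrderTopology G] [Archimedean G]
    {H : AddSubgroup G} (hH : ¬ Dense (H : Set G)) : DiscreteTopology H := by
  obtain ⟨a, rfl⟩ := H.dense_or_cyclic.resolve_left hH
  rw [← AddSubgroup.zmultiples_eq_closure]
  infer_instance

theorem Complex.discreteTopology_of_discreteTopology_re_im_image (s : Set ℂ)
    [DiscreteTopology (re '' s)] [DiscreteTopology (im '' s)] : DiscreteTopology s :=
  DiscreteTopology.of_continuous_injective
    (f := fun z : s ↦ ((⟨re z, z, z.2, rfl⟩ : re '' s), (⟨im z, z, z.2, rfl⟩ : im '' s)))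
    (by fun_prop)
    fun z w h ↦ Subtype.ext <| Complex.ext (congrArg (·.1.1) h) (congrArg (·.2.1) h)

/-- If an additive subgroup of `ℂ` is not discrete, then its set of real parts is
dense in `ℝ`, or its set of imaginary parts is dense in `ℝ`. -/
theorem dense_re_or_im_of_not_discrete (G : AddSubgroup ℂ)
    (h : ¬ DiscreteTopology G) :
    Dense (Complex.re '' (G : Set ℂ)) ∨ Dense (Complex.im '' (G : Set ℂ)) := by
  by_contra! hG
  obtain ⟨hre, him⟩ := hG
  have : DiscreteTopology (re '' (G : Set ℂ)) :=
    (G.map reAddGroupHom).discreteTopology_of_not_dense hre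
  have : DiscreteTopology (im '' (G : Set ℂ)) :=
    (G.map imAddGroupHom).discreteTopology_of_not_dense him
  exact h (discreteTopology_of_discreteTopology_re_im_image G)
end

section
/- Let g ≥ 2 and d ≥ 2g be integers. Define permutations r, u of {1, …, d} by: r is the cycle (1 2 … 2g−1) (cyclically permuting 1, …, 2g−1 and fixing 2g, …, d), and u(i) = 2g−1−i for 1 ≤ i ≤ 2g−2, u(i) = i+1 for 2g−1 ≤ i ≤ d−1, u(d) = 2g−1. Then the commutator ⁅r, u⁆ = r·u·r⁻¹·u⁻¹ has cycle type {g, g}, i.e., it is a product of two disjoint g-cycles and fixes the remaining d−2g points, and the subgroup generated by r and u acts transitively on {1, …, d}. -/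
/-! Writing a point as `u (r z)`, one has `⁅r, u⁆ (u (r z)) = r (u z)`, and a case split on `z`
shows that `⁅r, u⁆` acts as `x ↦ x + 2` on `1, …, 2g − 2`, sends `2g − 1 ↦ 1` and `2g ↦ 2`, and
fixes every point above `2g`: it is the product of the `g`-cycles `(1 3 … 2g−1)` and
`(2 4 … 2g)`. For transitivity, powers of `r` carry `1` to each of `1, …, 2g − 1`, and powers
of `u` then run from `2g − 1` through `d`. -/

open scoped commutatorElement
open Equiv Finset

namespace Equiv.Perm

variable {α : Type*} [Fintype α] [DecidableEq α]

theorem card_support_cycleOf_eq_of_pow_apply {f : Perm α} {x : α} {n : ℕ} (hx : f x ≠ x)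
    (hn : 0 < n) (hfix : (f ^ n) x = x) (hmin : ∀ k, 0 < k → k < n → (f ^ k) x ≠ x) :
    #(f.cycleOf x).support = n := by
  have hdvd : #(f.cycleOf x).support ∣ n := by
    have := (zpow_eq_zpow_on_iff f (m := n) (n := 0) hx).mp (by simpa using hfix)
    exact Int.natCast_dvd_natCast.mp (Int.dvd_of_emod_eq_zero (by simpa using this))
  refine le_antisymm (Nat.le_of_dvd hn hdvd) (not_lt.mp fun hlt => ?_)
  refine hmin _ ((support_cycleOf_nonempty.mpr hx).card_pos) hlt ?_
  simpa using (pow_mod_card_support_cycleOf_self_apply f #(f.cycleOf x).support x).symm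

theorem cycleType_eq_pair {σ : Perm α} {a b : α} (ha : σ a ≠ a) (hb : σ b ≠ b)
    (hab : ¬σ.SameCycle a b) (hcover : ∀ x, σ x ≠ x → σ.SameCycle a x ∨ σ.SameCycle b x) :
    σ.cycleType = {#(σ.cycleOf a).support, #(σ.cycleOf b).support} := by
  have hne : σ.cycleOf a ≠ σ.cycleOf b := fun h => by
    have hb' : b ∈ (σ.cycleOf a).support :=
      h ▸ mem_support_cycleOf_iff.mpr ⟨SameCycle.refl _ _, mem_support.mpr hb⟩
    exact hab (mem_support_cycleOf_iff.mp hb').1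
  have hfactors : σ.cycleFactorsFinset = {σ.cycleOf a, σ.cycleOf b} := by
    ext p
    refine ⟨fun hp => ?_, fun hp => ?_⟩
    · obtain ⟨y, hy⟩ := (mem_cycleFactorsFinset_iff.mp hp).1.nonempty_support
      rw [cycle_is_cycleOf hy hp]
      rcases hcover y (mem_support.mp (mem_cycleFactorsFinset_support_le hp hy)) with h | h
      · simp [h.cycleOf_eq]
      · simp [h.cycleOf_eq]
    · rcases Finset.mem_insert.mp hp with rfl | hp
      · exact cycleOf_mem_cycleFactorsFinset_iff.mpr (mem_support.mpr ha)
      · rw [Finset.mem_singleton.mp hp]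
        exact cycleOf_mem_cycleFactorsFinset_iff.mpr (mem_support.mpr hb)
  rw [cycleType_def, hfactors, insert_val_of_notMem (by simpa using hne)]
  rfl

end Equiv.Perm

theorem Subgroup.exists_mem_apply_eq_of_forall {α : Type*} {H : Subgroup (Perm α)} (a : α)
    (h : ∀ y, ∃ σ ∈ H, σ a = y) (x y : α) : ∃ σ ∈ H, σ x = y := by
  obtain ⟨σ, hσ, rfl⟩ := h x
  obtain ⟨τ, hτ, rfl⟩ := h y
  exact ⟨τ * σ⁻¹, H.mul_mem hτ (H.inv_mem hσ), by simp⟩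

theorem Subtype.val_pow_apply_eq_add_mul {p : ℕ → Prop} {σ : Perm (Subtype p)} {lo hi s : ℕ}
    (hσ : ∀ x : Subtype p, lo ≤ x → (x : ℕ) + s ≤ hi → (σ x : ℕ) = x + s)
    {x : Subtype p} (hx : lo ≤ x) {k : ℕ} (hk : x + s * k ≤ hi) :
    ((σ ^ k) x : ℕ) = x + s * k := by
  induction k with
  | zero => simp
  | succ k ih =>
    rw [pow_succ', Perm.mul_apply, hσ _ (by rw [ih (by nlinarith)]; omega)
      (by rw [ih (by nlinarith)]; nlinarith), ih (by nlinarith)]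
    ring

-- In the square-tiled surface, `r` and `u` send a square to its right and upper neighbours.
def rightSquare (g x : ℕ) : ℕ :=
  if x < 2 * g - 1 then x + 1 else if x = 2 * g - 1 then 1 else x

def upSquare (g d x : ℕ) : ℕ :=
  if x ≤ 2 * g - 2 then 2 * g - 1 - x else if x < d then x + 1 else 2 * g - 1

def oddEvenCycles (g x : ℕ) : ℕ :=
  if x ≤ 2 * g - 2 then x + 2 else if x ≤ 2 * g then x - (2 * g - 2) else x

def IsOddEvenCycles (g : ℕ) {d : ℕ} (c : Perm {i : ℕ // i ∈ Icc 1 d}) : Prop :=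
  ∀ x, (c x : ℕ) = oddEvenCycles g x

namespace IsOddEvenCycles

variable {g d : ℕ} {c : Perm {i : ℕ // i ∈ Icc 1 d}}

theorem val_pow_apply (hc : IsOddEvenCycles g c) {x : {i : ℕ // i ∈ Icc 1 d}} {k : ℕ}
    (hk : x + 2 * k ≤ 2 * g) : ((c ^ k) x : ℕ) = x + 2 * k :=
  Subtype.val_pow_apply_eq_add_mul (lo := 0)
    (fun y _ hy => by rw [hc, oddEvenCycles, if_pos (by omega)]) (Nat.zero_le _) hk

theorem pow_apply_self (hc : IsOddEvenCycles g c) (hg : 1 ≤ g) {x : {i : ℕ // i ∈ Icc 1 d}}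
    (hx : (x : ℕ) ≤ 2) : (c ^ g) x = x := by
  have hx1 := (mem_Icc.mp x.2).1
  refine Subtype.ext ?_
  rw [← Nat.sub_add_cancel hg, pow_succ', Perm.mul_apply, hc, oddEvenCycles,
    hc.val_pow_apply (by omega)]
  split_ifs <;> omega

theorem apply_ne_self (hc : IsOddEvenCycles g c) (hg : 2 ≤ g) {x : {i : ℕ // i ∈ Icc 1 d}}
    (hx : (x : ℕ) ≤ 2) : c x ≠ x := fun h => by
  have := hc.val_pow_apply (x := x) (k := 1) (by omega)
  rw [pow_one, h] at this
  omega

theorem card_support_cycleOf (hc : IsOddEvenCycles g c) (hg : 2 ≤ g)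
    {x : {i : ℕ // i ∈ Icc 1 d}} (hx : (x : ℕ) ≤ 2) : #(c.cycleOf x).support = g :=
  Perm.card_support_cycleOf_eq_of_pow_apply (hc.apply_ne_self hg hx) (by omega)
    (hc.pow_apply_self (by omega) hx) fun k hk hkg h => by
      have := hc.val_pow_apply (x := x) (k := k) (by omega)
      rw [h] at this
      omega

theorem exists_sameCycle (hc : IsOddEvenCycles g c) {x : {i : ℕ // i ∈ Icc 1 d}}
    (hx : c x ≠ x) : ∃ y : {i : ℕ // i ∈ Icc 1 d}, (y : ℕ) ≤ 2 ∧ c.SameCycle y x := by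
  have hx1 := mem_Icc.mp x.2
  have hx2 : (x : ℕ) ≤ 2 * g := by
    by_contra h
    exact hx (Subtype.ext (by rw [hc, oddEvenCycles, if_neg (by omega), if_neg (by omega)]))
  set k := ((x : ℕ) - 1) / 2
  refine ⟨⟨x - 2 * k, mem_Icc.mpr (by omega)⟩, by simp only; omega, ?_⟩
  convert (Perm.SameCycle.refl c _).pow_right (n := k)
  exact Subtype.ext (by rw [hc.val_pow_apply (by simp only; omega)]; simp only; omega)

theorem cycleType_eq (hc : IsOddEvenCycles g c) (hg : 2 ≤ g) (hd : 2 ≤ d) :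
    c.cycleType = {g, g} := by
  set a : {i : ℕ // i ∈ Icc 1 d} := ⟨1, mem_Icc.mpr ⟨le_rfl, by omega⟩⟩
  set b : {i : ℕ // i ∈ Icc 1 d} := ⟨2, mem_Icc.mpr ⟨by omega, hd⟩⟩
  have hab : ¬c.SameCycle a b := fun h => by
    obtain ⟨k, hk, hkb⟩ :=
      h.exists_pow_eq_of_mem_support (Perm.mem_support.mpr (hc.apply_ne_self hg one_le_two))
    rw [hc.card_support_cycleOf hg one_le_two] at hk
    have := hc.val_pow_apply (x := a) (k := k) (by simp only [a]; omega)
    rw [hkb] at this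
    simp only [a, b] at this
    omega
  have hcover (x) (hx : c x ≠ x) : c.SameCycle a x ∨ c.SameCycle b x := by
    obtain ⟨y, hy, hyx⟩ := hc.exists_sameCycle hx
    obtain rfl | rfl : y = a ∨ y = b := by
      have := (mem_Icc.mp y.2).1
      simp only [a, b, Subtype.ext_iff]
      omega
    exacts [Or.inl hyx, Or.inr hyx]
  rw [Perm.cycleType_eq_pair (hc.apply_ne_self hg one_le_two) (hc.apply_ne_self hg le_rfl) hab
    hcover, hc.card_support_cycleOf hg one_le_two, hc.card_support_cycleOf hg le_rfl]

end IsOddEvenCycles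

theorem rightSquare_upSquare {g d z : ℕ} (hg : 2 ≤ g) (hd : 2 * g ≤ d) (hz : z ∈ Icc 1 d) :
    rightSquare g (upSquare g d z) = oddEvenCycles g (upSquare g d (rightSquare g z)) := by
  rw [mem_Icc] at hz
  obtain h | h | h | h | h : z < 2 * g - 2 ∨ z = 2 * g - 2 ∨ z = 2 * g - 1 ∨
      (2 * g - 1 < z ∧ z < d) ∨ z = d := by omega
  all_goals simp (disch := omega) only [rightSquare, upSquare, oddEvenCycles, if_pos, if_neg,
    ↓reduceIte]
  all_goals omega

section Squares

variable {g d : ℕ} {r u : Perm {i : ℕ // i ∈ Icc 1 d}}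

theorem isOddEvenCycles_commutator (hg : 2 ≤ g) (hd : 2 * g ≤ d)
    (hr : ∀ x, (r x : ℕ) = rightSquare g x) (hu : ∀ x, (u x : ℕ) = upSquare g d x) :
    IsOddEvenCycles g ⁅r, u⁆ := fun x => by
  obtain ⟨z, rfl⟩ : ∃ z, u (r z) = x := ⟨r⁻¹ (u⁻¹ x), by simp⟩
  have hcomm : ⁅r, u⁆ (u (r z)) = r (u z) := by simp [commutatorElement_def]
  rw [hcomm, hr, hu, hu, hr, rightSquare_upSquare hg hd z.2]

theorem exists_mem_closure_apply_eq (hg : 1 ≤ g) (hr : ∀ x, (r x : ℕ) = rightSquare g x)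
    (hu : ∀ x, (u x : ℕ) = upSquare g d x) {a : {i : ℕ // i ∈ Icc 1 d}} (ha : (a : ℕ) = 1)
    (y : {i : ℕ // i ∈ Icc 1 d}) : ∃ σ ∈ Subgroup.closure {r, u}, σ a = y := by
  have hr_succ (x : {i : ℕ // i ∈ Icc 1 d}) (_ : 0 ≤ (x : ℕ)) (hx : (x : ℕ) + 1 ≤ 2 * g - 1) :
      (r x : ℕ) = x + 1 := by
    rw [hr, rightSquare, if_pos (by omega)]
  have hu_succ (x : {i : ℕ // i ∈ Icc 1 d}) (hx : 2 * g - 1 ≤ (x : ℕ)) (hxd : (x : ℕ) + 1 ≤ d) :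
      (u x : ℕ) = x + 1 := by
    rw [hu, upSquare, if_neg (by omega), if_pos (by omega)]
  have hr_mem : r ∈ Subgroup.closure {r, u} := Subgroup.subset_closure (by simp)
  have hu_mem : u ∈ Subgroup.closure {r, u} := Subgroup.subset_closure (by simp)
  have hy := mem_Icc.mp y.2
  have hcorner : ((r ^ (2 * g - 2)) a : ℕ) = 2 * g - 1 := by
    rw [Subtype.val_pow_apply_eq_add_mul hr_succ (Nat.zero_le _) (by omega)]
    omega
  by_cases hyg : (y : ℕ) ≤ 2 * g - 1
  · refine ⟨r ^ ((y : ℕ) - 1), Subgroup.pow_mem _ hr_mem _, Subtype.ext ?_⟩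
    rw [Subtype.val_pow_apply_eq_add_mul hr_succ (Nat.zero_le _) (by omega)]
    omega
  · refine ⟨u ^ ((y : ℕ) - (2 * g - 1)) * r ^ (2 * g - 2),
      Subgroup.mul_mem _ (Subgroup.pow_mem _ hu_mem _) (Subgroup.pow_mem _ hr_mem _),
      Subtype.ext ?_⟩
    rw [Perm.mul_apply, Subtype.val_pow_apply_eq_add_mul hu_succ hcorner.ge (by omega)]
    omega

end Squares

/-- For `g ≥ 2` and `d ≥ 2g`, let `r, u` be the permutations of `{1, …, d}` given by
`r = (1 2 … 2g−1)` and `u(i) = 2g−1−i` for `1 ≤ i ≤ 2g−2`, `u(i) = i+1` for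
`2g−1 ≤ i ≤ d−1`, `u(d) = 2g−1`. Then the commutator `⁅r, u⁆ = r u r⁻¹ u⁻¹` has cycle
type `{g, g}` (two disjoint `g`-cycles, fixing the remaining `d − 2g` points), and the
subgroup generated by `r` and `u` acts transitively on `{1, …, d}`. -/
theorem commutator_cycleType_two_g_cycles (g d : ℕ) (hg : 2 ≤ g) (hd : 2 * g ≤ d)
    (r u : Equiv.Perm {i : ℕ // i ∈ Finset.Icc 1 d})
    (hr : ∀ x, ((r x : ℕ) =
      if (x : ℕ) < 2 * g - 1 then (x : ℕ) + 1
      else if (x : ℕ) = 2 * g - 1 then 1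
      else (x : ℕ)))
    (hu : ∀ x, ((u x : ℕ) =
      if (x : ℕ) ≤ 2 * g - 2 then 2 * g - 1 - (x : ℕ)
      else if (x : ℕ) < d then (x : ℕ) + 1
      else 2 * g - 1)) :
    (⁅r, u⁆).cycleType = {g, g} ∧
    ∀ x y : {i : ℕ // i ∈ Finset.Icc 1 d},
      ∃ h ∈ Subgroup.closure ({r, u} : Set (Equiv.Perm {i : ℕ // i ∈ Finset.Icc 1 d})),
        h x = y :=
  ⟨(isOddEvenCycles_commutator hg hd hr hu).cycleType_eq hg (by omega),
    Subgroup.exists_mem_apply_eq_of_forall ⟨1, mem_Icc.mpr ⟨le_rfl, by omega⟩⟩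
      (exists_mem_closure_apply_eq (by omega) hr hu rfl)⟩
end

section
/- Let g ≥ 2 and d ≥ 2g−1 be integers. Define permutations r, u of {1, …, d} by: r is the cycle (1 2 … d), and u(i) = 2g−1−i for 1 ≤ i ≤ 2g−2, u(i) = i for all other i. Then the commutator ⁅r, u⁆ = r·u·r⁻¹·u⁻¹ is a single cycle of length 2g−1 fixing the remaining d−(2g−1) points, i.e., its cycle type is {2g−1}; moreover the subgroup generated by r and u acts transitively on {1, …, d}. -/
open scoped commutatorElement

/-!
On `{1, …, d}` the commutator `⁅r, u⁆` sends `i ↦ i + 2` for `i ≤ 2g − 3`, `2g − 2 ↦ 1`,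
`2g − 1 ↦ 2`, and fixes every `i > 2g − 1`. Hence it runs through the odd points
`1, 3, …, 2g − 1`, then the even points `2, 4, …, 2g − 2`, and back to `1`: a single
`(2g − 1)`-cycle. Transitivity already holds for the powers of the `d`-cycle `r`.
-/

open Equiv

namespace Equiv.Perm

variable {p : ℕ → Prop} {σ : Perm (Subtype p)} {s b : ℕ}

theorem val_pow_apply_of_val_apply_eq_add
    (hσ : ∀ z : Subtype p, (z : ℕ) + s ≤ b → (σ z : ℕ) = z + s) (x : Subtype p) :
    ∀ k, (x : ℕ) + s * k ≤ b → ((σ ^ k) x : ℕ) = x + s * k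
  | 0, _ => rfl
  | k + 1, hk => by
    have ih := val_pow_apply_of_val_apply_eq_add hσ x k (by nlinarith)
    rw [pow_succ', mul_apply, hσ _ (by rw [ih]; linarith), ih]
    ring

theorem sameCycle_of_val_eq_add_mul
    (hσ : ∀ z : Subtype p, (z : ℕ) + s ≤ b → (σ z : ℕ) = z + s) {x y : Subtype p} {k : ℕ}
    (hy : (y : ℕ) = x + s * k) (hyb : (y : ℕ) ≤ b) : SameCycle σ x y :=
  ⟨k, Subtype.ext <| by
    rw [zpow_natCast, val_pow_apply_of_val_apply_eq_add hσ x k (hy ▸ hyb), hy]⟩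

end Equiv.Perm

open Equiv.Perm

section

variable {g d : ℕ}

def IsCyclicShift (r : Perm {i : ℕ // i ∈ Finset.Icc 1 d}) : Prop :=
  ∀ x, (r x : ℕ) = if (x : ℕ) < d then (x : ℕ) + 1 else 1

def IsInitialReversal (g : ℕ) (u : Perm {i : ℕ // i ∈ Finset.Icc 1 d}) : Prop :=
  ∀ x, (u x : ℕ) = if (x : ℕ) ≤ 2 * g - 2 then 2 * g - 1 - (x : ℕ) else (x : ℕ)

variable {r u : Perm {i : ℕ // i ∈ Finset.Icc 1 d}}

theorem IsCyclicShift.val_inv_apply (hr : IsCyclicShift r) (x : {i : ℕ // i ∈ Finset.Icc 1 d}) :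
    (r⁻¹ x : ℕ) = if (x : ℕ) = 1 then d else (x : ℕ) - 1 := by
  have h := hr (r⁻¹ x)
  rw [show r (r⁻¹ x) = x from r.apply_symm_apply x] at h
  have := Finset.mem_Icc.mp (r⁻¹ x).2
  have := Finset.mem_Icc.mp x.2
  split at h <;> split <;> omega

theorem IsInitialReversal.inv_eq (hu : IsInitialReversal g u) : u⁻¹ = u := by
  refine inv_eq_of_mul_eq_one_left (Equiv.ext fun x => Subtype.ext ?_)
  have := Finset.mem_Icc.mp x.2
  simp only [mul_apply, one_apply, hu (u x), hu x]
  split_ifs <;> omega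

theorem val_commutator_apply (hr : IsCyclicShift r) (hu : IsInitialReversal g u)
    (hg : 2 ≤ g) (hd : 2 * g - 1 ≤ d) (x : {i : ℕ // i ∈ Finset.Icc 1 d}) :
    (⁅r, u⁆ x : ℕ) =
      if (x : ℕ) ≤ 2 * g - 3 then (x : ℕ) + 2
      else if (x : ℕ) = 2 * g - 2 then 1
      else if (x : ℕ) = 2 * g - 1 then 2
      else (x : ℕ) := by
  have := Finset.mem_Icc.mp x.2
  rw [commutatorElement_def, hu.inv_eq]
  simp only [mul_apply, hr _, hu _, hr.val_inv_apply]
  split_ifs <;> omega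

theorem commutator_apply_eq_self_iff (hr : IsCyclicShift r) (hu : IsInitialReversal g u)
    (hg : 2 ≤ g) (hd : 2 * g - 1 ≤ d) (x : {i : ℕ // i ∈ Finset.Icc 1 d}) :
    ⁅r, u⁆ x = x ↔ 2 * g - 1 < (x : ℕ) := by
  have := Finset.mem_Icc.mp x.2
  rw [← Subtype.val_inj, val_commutator_apply hr hu hg hd]
  split_ifs <;> omega

theorem card_support_commutator (hr : IsCyclicShift r) (hu : IsInitialReversal g u)
    (hg : 2 ≤ g) (hd : 2 * g - 1 ≤ d) : (⁅r, u⁆).support.card = 2 * g - 1 := by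
  have hmap : (⁅r, u⁆).support.map (Function.Embedding.subtype _) = Finset.Icc 1 (2 * g - 1) := by
    ext n
    simp only [Finset.mem_map, mem_support, Function.Embedding.subtype_apply, Finset.mem_Icc,
      Ne, commutator_apply_eq_self_iff hr hu hg hd, not_lt]
    constructor
    · rintro ⟨x, hx, rfl⟩
      exact ⟨(Finset.mem_Icc.mp x.2).1, hx⟩
    · intro hn
      exact ⟨⟨n, Finset.mem_Icc.mpr ⟨hn.1, hn.2.trans hd⟩⟩, hn.2, rfl⟩
  rw [← Finset.card_map, hmap, Nat.card_Icc, Nat.add_sub_cancel]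

theorem isCycle_commutator (hr : IsCyclicShift r) (hu : IsInitialReversal g u)
    (hg : 2 ≤ g) (hd : 2 * g - 1 ≤ d) : (⁅r, u⁆).IsCycle := by
  have hstep : ∀ z : {i : ℕ // i ∈ Finset.Icc 1 d}, (z : ℕ) + 2 ≤ 2 * g - 1 →
      (⁅r, u⁆ z : ℕ) = z + 2 := fun z hz => by
    rw [val_commutator_apply hr hu hg hd, if_pos (by omega)]
  obtain ⟨one, hone⟩ : ∃ x : {i : ℕ // i ∈ Finset.Icc 1 d}, (x : ℕ) = 1 :=
    ⟨⟨1, Finset.mem_Icc.mpr ⟨le_rfl, by omega⟩⟩, rfl⟩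
  obtain ⟨last, hlast⟩ : ∃ x : {i : ℕ // i ∈ Finset.Icc 1 d}, (x : ℕ) = 2 * g - 1 :=
    ⟨⟨2 * g - 1, Finset.mem_Icc.mpr ⟨by omega, hd⟩⟩, rfl⟩
  have hodd : ∀ y : {i : ℕ // i ∈ Finset.Icc 1 d}, (y : ℕ) % 2 = 1 → (y : ℕ) ≤ 2 * g - 1 →
      SameCycle ⁅r, u⁆ one y := fun y hy_odd hy =>
    sameCycle_of_val_eq_add_mul hstep (k := ((y : ℕ) - 1) / 2) (by omega) hy
  have htwo : SameCycle ⁅r, u⁆ one (⁅r, u⁆ last) :=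
    sameCycle_apply_right.2 (hodd last (by omega) hlast.le)
  have hlast_apply : (⁅r, u⁆ last : ℕ) = 2 := by
    rw [val_commutator_apply hr hu hg hd]
    split_ifs <;> omega
  refine ⟨one, by rw [Ne, commutator_apply_eq_self_iff hr hu hg hd]; omega, fun y hy => ?_⟩
  have hy := not_lt.1 <| (commutator_apply_eq_self_iff hr hu hg hd y).not.1 hy
  have := Finset.mem_Icc.mp y.2
  rcases Nat.mod_two_eq_zero_or_one (y : ℕ) with hy_even | hy_odd
  · exact htwo.trans <| sameCycle_of_val_eq_add_mul hstep (k := ((y : ℕ) - 2) / 2) (by omega) hy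
  · exact hodd y hy_odd hy

theorem IsCyclicShift.sameCycle (hr : IsCyclicShift r) (x y : {i : ℕ // i ∈ Finset.Icc 1 d}) :
    SameCycle r x y := by
  have hx := Finset.mem_Icc.mp x.2
  have hstep : ∀ z : {i : ℕ // i ∈ Finset.Icc 1 d}, (z : ℕ) + 1 ≤ d → (r z : ℕ) = z + 1 :=
    fun z hz => by rw [hr, if_pos (by omega)]
  obtain ⟨one, hone⟩ : ∃ x : {i : ℕ // i ∈ Finset.Icc 1 d}, (x : ℕ) = 1 :=
    ⟨⟨1, Finset.mem_Icc.mpr ⟨le_rfl, by omega⟩⟩, rfl⟩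
  have hsame : ∀ z : {i : ℕ // i ∈ Finset.Icc 1 d}, SameCycle r one z := fun z =>
    have := Finset.mem_Icc.mp z.2
    sameCycle_of_val_eq_add_mul hstep (k := (z : ℕ) - 1) (by omega) this.2
  exact (hsame x).symm.trans (hsame y)

end

/-- For `g ≥ 2` and `d ≥ 2g−1`, let `r, u` be the permutations of `{1, …, d}` given by
`r = (1 2 … d)` and `u(i) = 2g−1−i` for `1 ≤ i ≤ 2g−2`, `u(i) = i` otherwise. Then the
commutator `⁅r, u⁆ = r u r⁻¹ u⁻¹` is a single `(2g−1)`-cycle fixing the remaining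
`d − (2g−1)` points, i.e. its cycle type is `{2g−1}`, and the subgroup generated by
`r` and `u` acts transitively on `{1, …, d}`. -/
theorem commutator_cycleType_single_cycle (g d : ℕ) (hg : 2 ≤ g) (hd : 2 * g - 1 ≤ d)
    (r u : Equiv.Perm {i : ℕ // i ∈ Finset.Icc 1 d})
    (hr : ∀ x, ((r x : ℕ) = if (x : ℕ) < d then (x : ℕ) + 1 else 1))
    (hu : ∀ x, ((u x : ℕ) =
      if (x : ℕ) ≤ 2 * g - 2 then 2 * g - 1 - (x : ℕ) else (x : ℕ))) :
    (⁅r, u⁆).cycleType = {2 * g - 1} ∧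
    ∀ x y : {i : ℕ // i ∈ Finset.Icc 1 d},
      ∃ h ∈ Subgroup.closure ({r, u} : Set (Equiv.Perm {i : ℕ // i ∈ Finset.Icc 1 d})),
        h x = y := by
  refine ⟨?_, fun x y => ?_⟩
  · rw [(isCycle_commutator hr hu hg hd).cycleType, card_support_commutator hr hu hg hd]
  · obtain ⟨i, hi⟩ := IsCyclicShift.sameCycle hr x y
    exact ⟨r ^ i, zpow_mem (Subgroup.subset_closure (by simp)) i, hi⟩
end

section
/- Let d ≥ 1 and k ≥ 0 be integers, and for each i = 1, …, k let A_i be a partition of d (a multiset of positive integers with sum d). Assume the parity condition: Σ_{i=1}^k Σ_{n ∈ A_i} (n − 1) is even. Then there exist permutations x, y, σ_1, …, σ_k of {1, …, d} such that: (i) for each i, the multiset of cardinalities of the orbits of the cyclic group generated by σ_i on {1, …, d} equals A_i; (ii) x·y·x⁻¹·y⁻¹ = σ_1·σ_2·⋯·σ_k; and (iii) the subgroup of S_d generated by x, y, σ_1, …, σ_k acts transitively on {1, …, d}. -/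
/-- The multiset of cardinalities of the orbits of the cyclic group generated by a
permutation `σ` of a finite type: its cycle lengths together with one part equal to `1`
for each fixed point. -/
def orbitSizes {α : Type*} [Fintype α] [DecidableEq α] (σ : Equiv.Perm α) : Multiset ℕ :=
  σ.cycleType + Multiset.replicate (Finset.univ.filter fun a => σ a = a).card 1

/-!
An even permutation `π` of a finite set is a product `u * v` of two full cycles. Then `v` is
conjugate to `u⁻¹`, say `v = y * u⁻¹ * y⁻¹`, so `π = u * y * u⁻¹ * y⁻¹`, and `u` alone already
acts transitively. The `σ i` are any permutations with the prescribed orbit sizes; the parity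
condition says exactly that their product is even.

The factorisation is proved along a word in transpositions, carrying along the odd case: an odd
permutation is `u * w` with `u` a full cycle and `w` a permutation with two orbits. A
transposition splits a full cycle into two orbits, and a product of two permutations with two
orbits each is regrouped into two full cycles by one transposition joining the orbits of both.
-/

open Equiv Finset

namespace Equiv.Perm

variable {α : Type*}

def IsFullCycleOn (c : Perm α) (s : Finset α) : Prop :=
  c.IsCycleOn s ∧ ∀ x ∉ s, c x = x

namespace IsFullCycleOn

variable {c : Perm α} {s : Finset α}

theorem apply_mem (hc : IsFullCycleOn c s) {x : α} (hx : x ∈ s) : c x ∈ s := by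
  exact_mod_cast hc.1.1.mapsTo hx

theorem of_sameCycle (hfix : ∀ x ∉ s, c x = x) (hsame : ∀ x ∈ s, ∀ y ∈ s, c.SameCycle x y) :
    IsFullCycleOn c s := by
  refine ⟨⟨c.bijOn fun x => ?_, fun x hx y hy => hsame x hx y hy⟩, hfix⟩
  refine ⟨fun hcx => ?_, fun hx => ?_⟩
  · by_contra hx
    exact hx (hfix x hx ▸ hcx)
  · by_contra hcx
    exact hcx (by rwa [c.injective (hfix (c x) hcx)])

theorem inv (hc : IsFullCycleOn c s) : IsFullCycleOn c⁻¹ s :=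
  ⟨isCycleOn_inv.mpr hc.1, fun x hx => inv_eq_iff_eq.mpr (hc.2 x hx).symm⟩

theorem isCycle [Fintype α] [DecidableEq α] (hc : IsFullCycleOn c s)
    (hs : (s : Set α).Nontrivial) : c.IsCycle ∧ c.support = s := by
  have hsupp : c.support = s := by
    ext x
    refine ⟨fun hx => ?_, fun hx => mem_support.mpr (hc.1.apply_ne hs hx)⟩
    by_contra hxs
    exact mem_support.mp hx (hc.2 x hxs)
  refine ⟨isCycle_iff_exists_isCycleOn.mpr ⟨s, hs, hc.1, fun x hx => ?_⟩, hsupp⟩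
  exact_mod_cast hsupp ▸ mem_support.mpr hx

variable [Fintype α]

theorem isConj [DecidableEq α] {u v : Perm α} (hu : IsFullCycleOn u univ)
    (hv : IsFullCycleOn v univ) : IsConj u v := by
  rcases subsingleton_or_nontrivial α with hα | hα
  · rw [Subsingleton.elim u v]
  · have huniv : ((univ : Finset α) : Set α).Nontrivial := by
      simpa using Set.nontrivial_univ
    obtain ⟨hu, hsu⟩ := hu.isCycle huniv
    obtain ⟨hv, hsv⟩ := hv.isCycle huniv
    exact hu.isConj hv (by rw [hsu, hsv])

theorem conj (hc : IsFullCycleOn c univ) (g : Perm α) : IsFullCycleOn (g * c * g⁻¹) univ :=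
  ⟨by simpa [Set.image_univ_of_surjective g.surjective] using hc.1.conj (g := g),
    fun x hx => absurd (mem_univ x) hx⟩

end IsFullCycleOn

theorem exists_sameCycle_of_pow_apply_eq {u w : Perm α} {S : Finset α} (hS : ∀ z ∈ S, u z ∈ S)
    {a : α} : ∀ (n : ℕ) {z : α}, z ∈ S → (u ^ n) z = a →
      ∃ b ∈ S, w.SameCycle z b ∧ (b = a ∨ w b ≠ u b)
  | 0, z, hz, h => ⟨z, hz, .refl _ _, .inl h⟩
  | n + 1, z, hz, h => by
    by_cases hwz : w z = u z
    · rw [pow_succ, mul_apply] at h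
      obtain ⟨b, hb, hzb, hb'⟩ := exists_sameCycle_of_pow_apply_eq hS n (hS z hz) h
      exact ⟨b, hb, sameCycle_apply_left.mp (hwz ▸ hzb), hb'⟩
    · exact ⟨z, hz, .refl _ _, .inr hwz⟩

theorem IsFullCycleOn.sameCycle_of_eqOn {u w : Perm α} {S : Finset α} {a : α}
    (hu : IsFullCycleOn u S) (ha : a ∈ S) (hwu : ∀ z ∈ S, z ≠ a → w z = u z) {z : α}
    (hz : z ∈ S) : w.SameCycle z a := by
  obtain ⟨n, -, hn⟩ := hu.1.exists_pow_eq hz ha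
  obtain ⟨b, hb, hzb, rfl | hb'⟩ :=
    exists_sameCycle_of_pow_apply_eq (fun _ => hu.apply_mem) n hz hn
  · exact hzb
  · by_cases hba : b = a
    · exact hba ▸ hzb
    · exact absurd (hwu b hb hba) hb'

variable [DecidableEq α]

theorem IsFullCycleOn.mul_mul_swap {u v : Perm α} {S T : Finset α} {a b : α}
    (hu : IsFullCycleOn u S) (hv : IsFullCycleOn v T) (hST : _root_.Disjoint S T) (ha : a ∈ S)
    (hb : b ∈ T) : IsFullCycleOn (u * v * swap a b) (S ∪ T) := by
  have haT : a ∉ T := disjoint_left.mp hST ha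
  have hbS : b ∉ S := disjoint_right.mp hST hb
  have hS : ∀ z ∈ S, (u * v * swap a b).SameCycle z a := fun z => hu.sameCycle_of_eqOn ha
    fun z hz hza => by
      have hzb : z ≠ b := fun h => hbS (h ▸ hz)
      simp [swap_apply_of_ne_of_ne hza hzb, hv.2 z (disjoint_left.mp hST hz)]
  have hT : ∀ z ∈ T, (u * v * swap a b).SameCycle z b := fun z => hv.sameCycle_of_eqOn hb
    fun z hz hzb => by
      have hza : z ≠ a := fun h => haT (h ▸ hz)
      simp [swap_apply_of_ne_of_ne hza hzb, hu.2 _ (disjoint_right.mp hST (hv.apply_mem hz))]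
  have hba : (u * v * swap a b).SameCycle b a := by
    refine sameCycle_apply_left.mp ?_
    simpa [hv.2 a haT] using hS (u a) (hu.apply_mem ha)
  refine .of_sameCycle (fun x hx => ?_) fun x hx y hy => ?_
  · simp only [mem_union, not_or] at hx
    have hxa : x ≠ a := fun h => hx.1 (h ▸ ha)
    have hxb : x ≠ b := fun h => hx.2 (h ▸ hb)
    simp [swap_apply_of_ne_of_ne hxa hxb, hv.2 x hx.2, hu.2 x hx.1]
  · have hxa : ∀ x ∈ S ∪ T, (u * v * swap a b).SameCycle x a := fun x hx =>
      (mem_union.mp hx).elim (hS x) fun hx => (hT x hx).trans hba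
    exact (hxa x hx).trans (hxa y hy).symm

theorem IsFullCycleOn.swap_mul_mul {u v : Perm α} {S T : Finset α} {a b : α}
    (hu : IsFullCycleOn u S) (hv : IsFullCycleOn v T) (hST : _root_.Disjoint S T) (ha : a ∈ S)
    (hb : b ∈ T) : IsFullCycleOn (swap a b * u * v) (S ∪ T) := by
  have h := (hv.inv.mul_mul_swap hu.inv hST.symm hb ha).inv
  rwa [mul_inv_rev, mul_inv_rev, inv_inv, inv_inv, swap_inv, swap_comm, ← mul_assoc,
    union_comm] at h

variable [Fintype α]

theorem isFullCycleOn_cycleOf (f : Perm α) (x : α) :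
    IsFullCycleOn (f.cycleOf x) (univ.filter (f.SameCycle x)) := by
  refine .of_sameCycle (fun z hz => cycleOf_apply_of_not_sameCycle (by simpa using hz))
    fun a ha b hb => ?_
  have hx : ∀ z ∈ univ.filter (f.SameCycle x), (f.cycleOf x).SameCycle x z := fun z hz => by
    obtain ⟨n, hn⟩ := (mem_filter.mp hz).2
    exact ⟨n, by rw [cycleOf_zpow_apply_self, hn]⟩
  exact (hx a ha).symm.trans (hx b hb)

def HasTwoOrbits (w : Perm α) : Prop :=
  ∃ (s : Finset α) (g₁ g₂ : Perm α), s.Nonempty ∧ sᶜ.Nonempty ∧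
    IsFullCycleOn g₁ s ∧ IsFullCycleOn g₂ sᶜ ∧ w = g₁ * g₂

theorem IsFullCycleOn.swap_mul_hasTwoOrbits {u : Perm α} (hu : IsFullCycleOn u univ) {x y : α}
    (hxy : x ≠ y) : HasTwoOrbits (swap x y * u) := by
  set w := swap x y * u with hw
  have hxy_cover : ∀ z, w.SameCycle x z ∨ w.SameCycle y z := by
    intro z
    obtain ⟨n, -, hn⟩ := hu.1.exists_pow_eq (mem_univ z) (mem_univ x)
    obtain ⟨b, -, hzb, rfl | hb⟩ :=
      exists_sameCycle_of_pow_apply_eq (w := w) (fun _ _ => mem_univ _) n (mem_univ z) hn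
    · exact .inl hzb.symm
    have hub : u b = x ∨ u b = y := by
      by_contra! h
      exact hb (swap_apply_of_ne_of_ne h.1 h.2)
    have hzwb := sameCycle_apply_right.mpr hzb
    rcases hub with h | h
    · exact .inr (by simpa [hw, h] using hzwb.symm)
    · exact .inl (by simpa [hw, h] using hzwb.symm)
  have hxy_apart : ¬ w.SameCycle x y := by
    -- otherwise `w` is a full cycle, conjugate to `u` but of the opposite sign
    intro h
    have hfull : IsFullCycleOn w univ := .of_sameCycle (by simp) fun a _ b _ =>
      ((hxy_cover a).elim id h.trans).symm.trans ((hxy_cover b).elim id h.trans)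
    have hsign : sign w = sign u := isConj_iff_eq.mp (sign.map_isConj (hfull.isConj hu))
    rw [hw, sign_mul, sign_swap hxy, neg_one_mul] at hsign
    exact neg_units_ne_self _ hsign
  have hcompl : (univ.filter (w.SameCycle x))ᶜ = univ.filter (w.SameCycle y) := by
    ext z
    have := hxy_cover z
    simp only [mem_compl, mem_filter, mem_univ, true_and]
    exact ⟨this.resolve_left, fun hyz hxz => hxy_apart (hxz.trans hyz.symm)⟩
  refine ⟨univ.filter (w.SameCycle x), w.cycleOf x, w.cycleOf y,
    ⟨x, mem_filter.mpr ⟨mem_univ _, .refl _ _⟩⟩,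
    ⟨y, hcompl ▸ mem_filter.mpr ⟨mem_univ _, .refl _ _⟩⟩,
    isFullCycleOn_cycleOf w x, hcompl ▸ isFullCycleOn_cycleOf w y, ?_⟩
  ext z
  change w z = w.cycleOf x (w.cycleOf y z)
  by_cases hxz : w.SameCycle x z
  · rw [cycleOf_apply_of_not_sameCycle fun hyz => hxy_apart (hxz.trans hyz.symm), hxz.cycleOf_apply]
  · have hyz := (hxy_cover z).resolve_left hxz
    rw [hyz.cycleOf_apply, cycleOf_apply_of_not_sameCycle (mt sameCycle_apply_right.mp hxz)]

theorem HasTwoOrbits.exists_mul_eq {w w' : Perm α} (hw : HasTwoOrbits w)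
    (hw' : HasTwoOrbits w') :
    ∃ u v, IsFullCycleOn u univ ∧ IsFullCycleOn v univ ∧ w * w' = u * v := by
  obtain ⟨s, g₁, g₂, hs, hsc, hg₁, hg₂, rfl⟩ := hw
  obtain ⟨t, v₁, v₂, ht, htc, hv₁, hv₂, rfl⟩ := hw'
  wlog key : ∃ c ∈ s, ∃ c' ∈ sᶜ, c ∈ t ∧ c' ∈ tᶜ generalizing t v₁ v₂
  · have hcomm : Commute v₁ v₂ := Perm.Disjoint.commute fun z => by
      by_cases hz : z ∈ t
      · exact .inr (hv₂.2 z (by simpa using hz))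
      · exact .inl (hv₁.2 z hz)
    rw [hcomm.eq]
    -- `s ∩ t` or `sᶜ ∩ tᶜ` is empty; either way `s ∩ tᶜ` and `sᶜ ∩ t` are not
    refine this tᶜ v₂ v₁ htc (by rwa [compl_compl]) hv₂ (by rwa [compl_compl]) ?_
    simp only [mem_compl, compl_compl, not_exists, not_and] at key ⊢
    obtain ⟨a, ha⟩ := hs
    obtain ⟨b, hb⟩ := hsc
    obtain ⟨c, hc⟩ := ht
    obtain ⟨e, he⟩ := htc
    simp only [mem_compl] at hb he
    by_cases hcs : c ∈ s <;> by_cases hes : e ∈ s <;> grind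
  obtain ⟨c, hc, c', hc', hct, hc't⟩ := key
  refine ⟨g₁ * g₂ * swap c c', swap c c' * v₁ * v₂, ?_, ?_, ?_⟩
  · simpa using hg₁.mul_mul_swap hg₂ disjoint_compl_right hc hc'
  · simpa using hv₁.swap_mul_mul hv₂ disjoint_compl_right hct hc't
  · simp only [mul_assoc, swap_mul_self_mul]

theorem exists_isFullCycleOn_univ_mul_eq_of_sign_eq_one (π : Perm α) (hπ : sign π = 1) :
    ∃ u v, IsFullCycleOn u univ ∧ IsFullCycleOn v univ ∧ π = u * v := by
  suffices (sign π = 1 → ∃ u v, IsFullCycleOn u univ ∧ IsFullCycleOn v univ ∧ π = u * v) ∧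
      (sign π = -1 → ∃ u w, IsFullCycleOn u univ ∧ HasTwoOrbits w ∧ π = u * w) from this.1 hπ
  clear hπ
  induction π using swap_induction_on with
  | one =>
    obtain ⟨c, hc, -⟩ := exists_cycleOn (univ : Finset α)
    have hc : IsFullCycleOn c univ := ⟨hc, fun x hx => absurd (mem_univ x) hx⟩
    exact ⟨fun _ => ⟨c, c⁻¹, hc, hc.inv, (mul_inv_cancel c).symm⟩, fun h => by simp at h⟩
  | swap_mul f x y hxy ih =>
    have hsign : sign (swap x y * f) = -sign f := by rw [sign_mul, sign_swap hxy, neg_one_mul]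
    refine ⟨fun h => ?_, fun h => ?_⟩
    · obtain ⟨u, w, hu, hw, rfl⟩ := ih.2 (by rw [← neg_neg (sign f), ← hsign, h])
      obtain ⟨U, V, hU, hV, hUV⟩ := (hu.swap_mul_hasTwoOrbits hxy).exists_mul_eq hw
      exact ⟨U, V, hU, hV, by rw [← mul_assoc, hUV]⟩
    · obtain ⟨u, v, hu, hv, rfl⟩ := ih.1 (by rw [← neg_neg (sign _), ← hsign, h]; rfl)
      refine ⟨swap x y * u * swap x y, swap x y * v, by simpa using hu.conj (swap x y),
        hv.swap_mul_hasTwoOrbits hxy, ?_⟩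
      simp only [mul_assoc, swap_mul_self_mul]

end Equiv.Perm

theorem Multiset.prod_map_neg_neg_one_pow (m : Multiset ℕ) (hm : ∀ n ∈ m, 1 ≤ n) :
    (m.map fun n => -(-1 : ℤˣ) ^ n).prod = (-1) ^ (m.map fun n => n - 1).sum := by
  induction m using Multiset.induction_on with
  | empty => simp
  | cons a m ih =>
    obtain ⟨k, rfl⟩ : ∃ k, a = k + 1 := ⟨a - 1, by have := hm a (by simp); omega⟩
    simp [ih fun n hn => hm n (by simp [hn]), pow_succ, pow_add]

theorem Nat.Partition.filter_not_two_le_parts {n : ℕ} (A : n.Partition) :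
    A.parts.filter (fun k => ¬ 2 ≤ k) =
      Multiset.replicate (n - (A.parts.filter (2 ≤ ·)).sum) 1 := by
  have hones : ∀ k ∈ A.parts.filter (fun k => ¬ 2 ≤ k), k = 1 := fun k hk => by
    have := A.parts_pos (Multiset.mem_filter.mp hk).1
    have := (Multiset.mem_filter.mp hk).2
    omega
  have hsum := A.parts_sum
  rw [← Multiset.filter_add_not (2 ≤ ·) A.parts, Multiset.sum_add,
    Multiset.eq_replicate_card.mpr hones, Multiset.sum_replicate, smul_eq_mul, mul_one] at hsum
  rw [Multiset.eq_replicate_card.mpr hones]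
  congr 1
  omega

section orbitSizes

open Equiv.Perm

variable {α : Type*} [Fintype α] [DecidableEq α]

theorem orbitSizes_eq_cycleType_add_replicate (σ : Equiv.Perm α) :
    orbitSizes σ = σ.cycleType + Multiset.replicate (Fintype.card α - σ.cycleType.sum) 1 := by
  have hfix : univ.filter (fun a => σ a = a) = σ.supportᶜ := by
    ext
    simp
  rw [orbitSizes, hfix, card_compl, sum_cycleType]

theorem sign_eq_neg_one_pow_orbitSizes (σ : Equiv.Perm α) :
    sign σ = (-1) ^ ((orbitSizes σ).map fun n => n - 1).sum := by
  rw [sign_of_cycleType', orbitSizes, Multiset.map_add, Multiset.sum_add, Multiset.map_replicate,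
    Multiset.sum_replicate, Nat.sub_self, smul_zero, add_zero, Multiset.prod_map_neg_neg_one_pow]
  exact fun n hn => (two_le_of_mem_cycleType hn).trans' (by norm_num)

theorem exists_orbitSizes_eq {n : ℕ} (A : n.Partition) (hn : Fintype.card α = n) :
    ∃ σ : Equiv.Perm α, orbitSizes σ = A.parts := by
  have hle : (A.parts.filter (2 ≤ ·)).sum ≤ Fintype.card α :=
    calc _ ≤ (A.parts.filter (2 ≤ ·)).sum + (A.parts.filter fun k => ¬ 2 ≤ k).sum :=
          Nat.le_add_right _ _
      _ = Fintype.card α := by rw [← Multiset.sum_add, Multiset.filter_add_not, A.parts_sum, hn]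
  obtain ⟨σ, hσ⟩ := (exists_with_cycleType_iff α).mpr
    ⟨hle, fun k hk => (Multiset.mem_filter.mp hk).2⟩
  refine ⟨σ, ?_⟩
  rw [orbitSizes_eq_cycleType_add_replicate, hσ, hn, ← A.filter_not_two_le_parts,
    Multiset.filter_add_not]

end orbitSizes

theorem branch_data_realisable_on_torus_general (d k : ℕ)
    (A : Fin k → Nat.Partition d)
    (hparity : Even (∑ i : Fin k, ((A i).parts.map fun n => n - 1).sum)) :
    ∃ (x y : Equiv.Perm (Fin d)) (σ : Fin k → Equiv.Perm (Fin d)),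
      (∀ i, orbitSizes (σ i) = (A i).parts) ∧
      x * y * x⁻¹ * y⁻¹ = ((List.finRange k).map σ).prod ∧
      (∀ a b : Fin d,
        ∃ h ∈ Subgroup.closure (({x, y} ∪ Set.range σ : Set (Equiv.Perm (Fin d)))),
          h a = b) := by
  choose σ hσ using fun i => exists_orbitSizes_eq (A i) (Fintype.card_fin d)
  have hsign : Equiv.Perm.sign ((List.finRange k).map σ).prod = 1 := by
    rw [map_list_prod, List.map_map, ← Fin.prod_univ_def]
    simp only [Function.comp_apply, sign_eq_neg_one_pow_orbitSizes, hσ]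
    rw [Finset.prod_pow_eq_pow_sum, hparity.neg_one_pow]
  obtain ⟨u, v, hu, hv, huv⟩ :=
    Equiv.Perm.exists_isFullCycleOn_univ_mul_eq_of_sign_eq_one _ hsign
  obtain ⟨y, rfl⟩ := isConj_iff.mp (hu.inv.isConj hv)
  refine ⟨u, y, σ, hσ, by rw [huv]; group, fun a b => ?_⟩
  obtain ⟨n, rfl⟩ := hu.1.2 (by simp : a ∈ _) (by simp : b ∈ _)
  exact ⟨u ^ n, Subgroup.zpow_mem _ (Subgroup.subset_closure (by simp)) n, rfl⟩

/-- Realisability of candidate branch data by connected covers of the torus: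
given `d ≥ 1` and partitions `A_1, …, A_k` of `d` satisfying the Riemann–Hurwitz
parity condition, there exist permutations `x, y, σ_1, …, σ_k` of a `d`-element set
such that each `σ_i` has orbit-size multiset `A_i`, the commutator relation
`x y x⁻¹ y⁻¹ = σ_1 σ_2 ⋯ σ_k` holds, and the subgroup generated by
`x, y, σ_1, …, σ_k` is transitive. -/
theorem branch_data_realisable_on_torus (d k : ℕ) (hd : 1 ≤ d)
    (A : Fin k → Nat.Partition d)
    (hparity : Even (∑ i : Fin k, ((A i).parts.map fun n => n - 1).sum)) :
    ∃ (x y : Equiv.Perm (Fin d)) (σ : Fin k → Equiv.Perm (Fin d)),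
      (∀ i, orbitSizes (σ i) = (A i).parts) ∧
      x * y * x⁻¹ * y⁻¹ = ((List.finRange k).map σ).prod ∧
      (∀ a b : Fin d,
        ∃ h ∈ Subgroup.closure (({x, y} ∪ Set.range σ : Set (Equiv.Perm (Fin d)))),
          h a = b) :=
  branch_data_realisable_on_torus_general d k A hparity
end
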